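/- arXiv:0806.3380 — 4 statements merged into one kernel-verified Lean document; each statement's English description precedes it below -/
import Mathlib

section
/- Let C be a tensor triangulated category with a weight structure w compatible with the tensor product (i.e., C_{w≤0} ⊗ C_{w≤0} ⊆ C_{w≤0} and C_{w≥0} ⊗ C_{w≥0} ⊆ C_{w≥0}), the tensor bifunctor being additive and triangulated (exact) in each variable. Fix morphisms u : M_- → M_+ and u' : M_-' → M_+' with M_-, M_-' ∈ C_{w≤0} and M_+, M_+' ∈ C_{w≥0}, distinguished triangles C₀ → M_- →u M_+ → C₀[1] and C₀' → M_-' →u' M_+' → C₀'[1], and a distinguished triangle D → M_- ⊗ M_-' →(u⊗u') M_+ ⊗ M_+' → D[1]. If C₀ and C₀' are both without weights -1 and 0, then D is without weights -1 and 0. -/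
open CategoryTheory CategoryTheory.Limits CategoryTheory.Pretriangulated

universe v u

/-- The shift `S[n]` of a class of objects `S`: the objects isomorphic to `A⟦n⟧`
for some `A ∈ S`. -/
def shiftedSet {C : Type u} [Category.{v} C] [HasShift C ℤ] (S : Set C) (n : ℤ) : Set C :=
  {X | ∃ A ∈ S, Nonempty (X ≅ A⟦n⟧)}

/-- A weight structure on a pretriangulated category `C`, following Bondarko. -/
structure WeightStructure (C : Type u) [Category.{v} C] [Preadditive C] [HasZeroObject C]
    [HasShift C ℤ] [∀ n : ℤ, (shiftFunctor C n).Additive] [Pretriangulated C] where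
  /-- the objects of weights `≤ 0` -/
  le : Set C
  /-- the objects of weights `≥ 0` -/
  ge : Set C
  /-- `C_{w ≤ 0}` is closed under retracts -/
  retract_le : ∀ (X M : C) (i : X ⟶ M) (r : M ⟶ X), i ≫ r = 𝟙 X → M ∈ le → X ∈ le
  /-- `C_{w ≥ 0}` is closed under retracts -/
  retract_ge : ∀ (X M : C) (i : X ⟶ M) (r : M ⟶ X), i ≫ r = 𝟙 X → M ∈ ge → X ∈ ge
  /-- `C_{w ≤ 0} ⊆ C_{w ≤ 1}` -/
  le_shift : le ⊆ shiftedSet le 1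
  /-- `C_{w ≥ 1} ⊆ C_{w ≥ 0}` -/
  ge_shift : shiftedSet ge 1 ⊆ ge
  /-- orthogonality -/
  orth : ∀ (M N : C), M ∈ le → N ∈ shiftedSet ge 1 → ∀ f : M ⟶ N, f = 0
  /-- existence of weight filtrations -/
  exists_wf : ∀ M : C, ∃ (A B : C) (a : A ⟶ M) (b : M ⟶ B) (δ : B ⟶ A⟦(1:ℤ)⟧),
    Triangle.mk a b δ ∈ (distTriang C) ∧ A ∈ le ∧ B ∈ shiftedSet ge 1

namespace WeightStructure

variable {C : Type u} [Category.{v} C] [Preadditive C] [HasZeroObject C]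
  [HasShift C ℤ] [∀ n : ℤ, (shiftFunctor C n).Additive] [Pretriangulated C]

/-- `C_{w ≤ n} := C_{w ≤ 0}[n]`. -/
def wLE (w : WeightStructure C) (n : ℤ) : Set C := shiftedSet w.le n

/-- `C_{w ≥ n} := C_{w ≥ 0}[n]`. -/
def wGE (w : WeightStructure C) (n : ℤ) : Set C := shiftedSet w.ge n

/-- The heart `C_{w = 0} := C_{w ≤ 0} ∩ C_{w ≥ 0}`. -/
def heart (w : WeightStructure C) : Set C := w.le ∩ w.ge

/-- An object `M` is without weights `m, …, n` if it admits a weight filtration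
avoiding these weights. -/
def WithoutWeights (w : WeightStructure C) (m n : ℤ) (M : C) : Prop :=
  ∃ (A B : C) (a : A ⟶ M) (b : M ⟶ B) (δ : B ⟶ A⟦(1:ℤ)⟧),
    Triangle.mk a b δ ∈ (distTriang C) ∧ A ∈ w.wLE (m - 1) ∧ B ∈ w.wGE (n + 1)

end WeightStructure

section Tensor

variable {C : Type u} [Category.{v} C] [Preadditive C] [HasZeroObject C]
  [HasShift C ℤ] [∀ n : ℤ, (shiftFunctor C n).Additive] [Pretriangulated C]

/-- A tensor structure on `C` compatible with the triangulation: a bifunctor which is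
additive and triangulated (commutes with the shift and preserves distinguished triangles)
in each variable. -/
structure TensorTriangulated (C : Type u) [Category.{v} C] [Preadditive C] [HasZeroObject C]
    [HasShift C ℤ] [∀ n : ℤ, (shiftFunctor C n).Additive] [Pretriangulated C] where
  /-- the tensor bifunctor -/
  T : C ⥤ C ⥤ C
  /-- additivity in the second variable -/
  addR : ∀ X : C, (T.obj X).Additive
  /-- additivity in the first variable -/
  addL : ∀ Y : C, (T.flip.obj Y).Additive
  /-- commutation with the shift in the second variable -/
  commR : ∀ X : C, (T.obj X).CommShift ℤ
  /-- commutation with the shift in the first variable -/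
  commL : ∀ Y : C, (T.flip.obj Y).CommShift ℤ
  /-- exactness in the second variable -/
  trR : ∀ (X A B Z : C) (f : A ⟶ B) (g : B ⟶ Z) (h : Z ⟶ A⟦(1:ℤ)⟧),
    Triangle.mk f g h ∈ (distTriang C) →
    Triangle.mk ((T.obj X).map f) ((T.obj X).map g)
      ((T.obj X).map h ≫ (Functor.CommShift.commShiftIso (self := commR X) (T.obj X) (1:ℤ)).hom.app A) ∈ (distTriang C)
  /-- exactness in the first variable -/
  trL : ∀ (Y A B Z : C) (f : A ⟶ B) (g : B ⟶ Z) (h : Z ⟶ A⟦(1:ℤ)⟧),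
    Triangle.mk f g h ∈ (distTriang C) →
    Triangle.mk ((T.flip.obj Y).map f) ((T.flip.obj Y).map g)
      ((T.flip.obj Y).map h ≫ (Functor.CommShift.commShiftIso (self := commL Y) (T.flip.obj Y) (1:ℤ)).hom.app A) ∈ (distTriang C)

/-- The tensor product of two morphisms. -/
def TensorTriangulated.tmul (𝒯 : TensorTriangulated C) {X X' Y Y' : C}
    (f : X ⟶ Y) (g : X' ⟶ Y') : (𝒯.T.obj X).obj X' ⟶ (𝒯.T.obj Y).obj Y' :=
  (𝒯.T.map f).app X' ≫ (𝒯.T.obj Y).map g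

/-- The weight structure `w` is compatible with the tensor structure `𝒯`. -/
def TensorTriangulated.Compatible (𝒯 : TensorTriangulated C) (w : WeightStructure C) : Prop :=
  (∀ X Y : C, X ∈ w.le → Y ∈ w.le → (𝒯.T.obj X).obj Y ∈ w.le) ∧
  (∀ X Y : C, X ∈ w.ge → Y ∈ w.ge → (𝒯.T.obj X).obj Y ∈ w.ge)

end Tensor

/-!
That `C₀` is without weights `-1, 0` is a triangle `A ⟶ C₀ ⟶ B` with `A ∈ C_{w ≤ -2}` and
`B ∈ C_{w ≥ 1}`. The octahedron for `A ⟶ C₀ ⟶ M₋` factors `u` as `p ≫ q` through some `E`,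
with fibres `A` and `B`; extension-closedness puts `E` in the heart. Then `p ⊗ p'` is the
composite of `p ⊗ M₋'` and `E ⊗ p'`, whose fibres `A ⊗ M₋'` and `E ⊗ A'` lie in `C_{w ≤ -2}`,
so its fibre does too; dually the fibre of `q ⊗ q'` lies in `C_{w ≥ 1}`. Finally the octahedron
for `u ⊗ u' = (p ⊗ p') ≫ (q ⊗ q')`, written with fibres, is a triangle
`fib (p ⊗ p') ⟶ D ⟶ fib (q ⊗ q')`: a weight decomposition of `D` avoiding the weights `-1, 0`.
-/

section Retract

variable {C : Type u} [Category.{v} C]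

def IsRetractClosed (S : Set C) : Prop :=
  ∀ (X M : C) (i : X ⟶ M) (r : M ⟶ X), i ≫ r = 𝟙 X → M ∈ S → X ∈ S

lemma IsRetractClosed.mem_of_retract {S : Set C} (hS : IsRetractClosed S) {X M : C}
    (h : Retract X M) (hM : M ∈ S) : X ∈ S :=
  hS X M h.i h.r h.retract hM

lemma IsRetractClosed.mem_of_iso {S : Set C} (hS : IsRetractClosed S) {X Y : C} (e : X ≅ Y)
    (hY : Y ∈ S) : X ∈ S :=
  hS.mem_of_retract e.retract hY

end Retract

section Shift

variable {C : Type u} [Category.{v} C] [HasShift C ℤ]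

lemma mem_shiftedSet_of_iso {S : Set C} {n : ℤ} {X Y : C} (e : X ≅ Y)
    (hY : Y ∈ shiftedSet S n) : X ∈ shiftedSet S n := by
  obtain ⟨A, hA, ⟨e'⟩⟩ := hY
  exact ⟨A, hA, ⟨e ≪≫ e'⟩⟩

lemma shift_mem_shiftedSet {S : Set C} {A : C} (hA : A ∈ S) (n : ℤ) : A⟦n⟧ ∈ shiftedSet S n :=
  ⟨A, hA, ⟨Iso.refl _⟩⟩

lemma mem_shiftedSet_zero {S : Set C} {X : C} (hX : X ∈ S) : X ∈ shiftedSet S 0 :=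
  mem_shiftedSet_of_iso ((shiftFunctorZero C ℤ).app X).symm (shift_mem_shiftedSet hX 0)

lemma shift_mem_shiftedSet_add {S : Set C} {a : ℤ} {X : C} (hX : X ∈ shiftedSet S a)
    (b c : ℤ) (h : a + b = c) : X⟦b⟧ ∈ shiftedSet S c := by
  obtain ⟨A, hA, ⟨e⟩⟩ := hX
  exact ⟨A, hA, ⟨(shiftFunctor C b).mapIso e ≪≫ (shiftFunctorAdd' C a b c h).symm.app A⟩⟩

lemma IsRetractClosed.mem_of_mem_shiftedSet_zero {S : Set C} (hS : IsRetractClosed S) {X : C}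
    (hX : X ∈ shiftedSet S 0) : X ∈ S := by
  obtain ⟨A, hA, ⟨e⟩⟩ := hX
  exact hS.mem_of_iso (e ≪≫ (shiftFunctorZero C ℤ).app A) hA

lemma IsRetractClosed.shiftedSet {S : Set C} (hS : IsRetractClosed S) (n : ℤ) :
    IsRetractClosed (shiftedSet S n) := by
  intro X M i r hir hM
  obtain ⟨A, hA, ⟨e⟩⟩ := hM
  have hX : X⟦-n⟧ ∈ S := hS.mem_of_retract
    ((Retract.mk i r hir).map (shiftFunctor C (-n)) |>.trans
      ((shiftFunctor C (-n)).mapIso e ≪≫ (shiftFunctorCompIsoId C n (-n) (by omega)).app A).retract)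
    hA
  exact ⟨X⟦-n⟧, hX, ⟨((shiftFunctorCompIsoId C (-n) n (by omega)).app X).symm⟩⟩

lemma mem_shiftedSet_map {D : Type*} [Category D] [HasShift D ℤ] (F : C ⥤ D) [F.CommShift ℤ]
    {S : Set C} {S' : Set D} (hF : ∀ X ∈ S, F.obj X ∈ S') {n : ℤ} {X : C}
    (hX : X ∈ shiftedSet S n) : F.obj X ∈ shiftedSet S' n := by
  obtain ⟨A, hA, ⟨e⟩⟩ := hX
  exact ⟨F.obj A, hF A hA, ⟨F.mapIso e ≪≫ (F.commShiftIso n).app A⟩⟩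

end Shift

section Triangulated

variable {C : Type u} [Category.{v} C] [Preadditive C] [HasZeroObject C]
  [HasShift C ℤ] [∀ n : ℤ, (shiftFunctor C n).Additive] [Pretriangulated C]

def IsExtensionClosed (S : Set C) : Prop :=
  ∀ T ∈ distTriang C, T.obj₁ ∈ S → T.obj₃ ∈ S → T.obj₂ ∈ S

lemma distinguished_of_iso₂ {A X B M : C} {a : A ⟶ X} {b : X ⟶ B} {δ : B ⟶ A⟦(1:ℤ)⟧}
    (hT : Triangle.mk a b δ ∈ distTriang C) (e : X ≅ M) :
    Triangle.mk (a ≫ e.hom) (e.inv ≫ b) δ ∈ distTriang C :=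
  -- `Triangle.mk` is unfolded first: its projections occur in implicit arguments that block `simp`
  isomorphic_distinguished _ hT _ (Triangle.isoMk _ _ (Iso.refl _) e.symm (Iso.refl _)
    (by dsimp [Triangle.mk]; simp) (by dsimp [Triangle.mk]; simp) (by dsimp [Triangle.mk]; simp))

def HasFiberIn (S : Set C) {X Y : C} (f : X ⟶ Y) : Prop :=
  ∃ (Z : C) (v : Z ⟶ X) (w : Y ⟶ Z⟦(1:ℤ)⟧), Triangle.mk v f w ∈ distTriang C ∧ Z ∈ S

lemma HasFiberIn.map {D : Type*} [Category D] [Preadditive D] [HasZeroObject D] [HasShift D ℤ]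
    [∀ n : ℤ, (shiftFunctor D n).Additive] [Pretriangulated D]
    (F : C ⥤ D) [F.CommShift ℤ] [F.IsTriangulated] {S : Set C} {S' : Set D}
    (hF : ∀ X ∈ S, F.obj X ∈ S') {X Y : C} {f : X ⟶ Y} (hf : HasFiberIn S f) :
    HasFiberIn S' (F.map f) := by
  obtain ⟨Z, v, w, hT, hZ⟩ := hf
  exact ⟨F.obj Z, F.map v, _, F.map_distinguished _ hT, hF Z hZ⟩

lemma HasFiberIn.comp [IsTriangulated C] {S : Set C} (hS : IsExtensionClosed S) {X Y Z : C}
    {f : X ⟶ Y} {g : Y ⟶ Z} (hf : HasFiberIn S f) (hg : HasFiberIn S g) :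
    HasFiberIn S (f ≫ g) := by
  obtain ⟨K, vK, wK, hK, hKS⟩ := hf
  obtain ⟨L, vL, wL, hL, hLS⟩ := hg
  obtain ⟨M, vM, wM, hM⟩ := distinguished_cocone_triangle₁ (f ≫ g)
  have H := Triangulated.someOctahedron' rfl hK hL hM
  exact ⟨M, vM, wM, hM, hS _ H.mem hKS hLS⟩

end Triangulated

namespace WeightStructure

variable {C : Type u} [Category.{v} C] [Preadditive C] [HasZeroObject C]
  [HasShift C ℤ] [∀ n : ℤ, (shiftFunctor C n).Additive] [Pretriangulated C]
  (w : WeightStructure C)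

lemma isRetractClosed_wLE (k : ℤ) : IsRetractClosed (w.wLE k) :=
  IsRetractClosed.shiftedSet w.retract_le k

lemma isRetractClosed_wGE (k : ℤ) : IsRetractClosed (w.wGE k) :=
  IsRetractClosed.shiftedSet w.retract_ge k

lemma le_subset_wLE {j : ℤ} (hj : 0 ≤ j) : w.le ⊆ w.wLE j := by
  induction j, hj using Int.leInduction with
  | base => exact fun _ => mem_shiftedSet_zero
  | succ j _ ih =>
    intro X hX
    obtain ⟨A, hA, ⟨e⟩⟩ := ih hX
    exact mem_shiftedSet_of_iso e (shift_mem_shiftedSet_add (w.le_shift hA) j (j + 1) (by ring))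

lemma wLE_subset_le {m : ℤ} (hm : m ≤ 0) : w.wLE m ⊆ w.le := by
  rintro X ⟨A, hA, ⟨e⟩⟩
  have hA' : A ∈ w.wLE (-m) := w.le_subset_wLE (by omega) hA
  exact IsRetractClosed.mem_of_mem_shiftedSet_zero w.retract_le
    (mem_shiftedSet_of_iso e (shift_mem_shiftedSet_add hA' m 0 (by ring)))

lemma wGE_subset_ge {j : ℤ} (hj : 0 ≤ j) : w.wGE j ⊆ w.ge := by
  induction j, hj using Int.leInduction with
  | base => exact fun X => IsRetractClosed.mem_of_mem_shiftedSet_zero w.retract_ge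
  | succ j _ ih =>
    rintro X ⟨A, hA, ⟨e⟩⟩
    have hA₁ : A⟦(1:ℤ)⟧ ∈ w.ge := w.ge_shift (shift_mem_shiftedSet hA 1)
    exact ih (mem_shiftedSet_of_iso (e ≪≫ (shiftFunctorAdd' C 1 j (j + 1) (by ring)).app A)
      (shift_mem_shiftedSet hA₁ j))

lemma hom_eq_zero_of_wLE_of_wGE {k l : ℤ} (hkl : k + 1 = l) {X Y : C} (hX : X ∈ w.wLE k)
    (hY : Y ∈ w.wGE l) (f : X ⟶ Y) : f = 0 := by
  have hX' : X⟦-k⟧ ∈ w.le := IsRetractClosed.mem_of_mem_shiftedSet_zero w.retract_le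
    (shift_mem_shiftedSet_add hX (-k) 0 (by ring))
  have hY' : Y⟦-k⟧ ∈ shiftedSet w.ge 1 := shift_mem_shiftedSet_add hY (-k) 1 (by omega)
  apply (shiftFunctor C (-k)).map_injective
  rw [w.orth _ _ hX' hY' ((shiftFunctor C (-k)).map f), Functor.map_zero]

lemma exists_distTriang_wLE_wGE {k l : ℤ} (hkl : k + 1 = l) (M : C) :
    ∃ (A B : C) (a : A ⟶ M) (b : M ⟶ B) (δ : B ⟶ A⟦(1:ℤ)⟧),
      Triangle.mk a b δ ∈ distTriang C ∧ A ∈ w.wLE k ∧ B ∈ w.wGE l := by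
  obtain ⟨A, B, a, b, δ, hT, hA, hB⟩ := w.exists_wf (M⟦-k⟧)
  let T := (Triangle.shiftFunctor C k).obj (Triangle.mk a b δ)
  let e : M⟦-k⟧⟦k⟧ ≅ M := (shiftFunctorCompIsoId C (-k) k (by omega)).app M
  exact ⟨A⟦k⟧, B⟦k⟧, _, _, _, distinguished_of_iso₂ (a := T.mor₁) (b := T.mor₂) (δ := T.mor₃)
      (Triangle.shift_distinguished _ hT k) e,
    shift_mem_shiftedSet hA k, shift_mem_shiftedSet_add hB k l (by omega)⟩

lemma isExtensionClosed_wLE (k : ℤ) : IsExtensionClosed (w.wLE k) := by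
  intro T hT h₁ h₃
  obtain ⟨A, B, a, b, δ, hAB, hA, hB⟩ := w.exists_distTriang_wLE_wGE rfl T.obj₂
  have hb : b = 0 := by
    obtain ⟨g, rfl⟩ := T.yoneda_exact₂ hT b (w.hom_eq_zero_of_wLE_of_wGE rfl h₁ hB _)
    rw [w.hom_eq_zero_of_wLE_of_wGE rfl h₃ hB g, comp_zero]
  obtain ⟨r, hr⟩ := Triangle.coyoneda_exact₂ _ hAB (𝟙 T.obj₂) (by rw [hb]; exact comp_zero)
  exact w.isRetractClosed_wLE k _ _ r a hr.symm hA

lemma isExtensionClosed_wGE (l : ℤ) : IsExtensionClosed (w.wGE l) := by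
  intro T hT h₁ h₃
  obtain ⟨A, B, a, b, δ, hAB, hA, hB⟩ := w.exists_distTriang_wLE_wGE (sub_add_cancel l 1) T.obj₂
  have ha : a = 0 := by
    obtain ⟨g, rfl⟩ := T.coyoneda_exact₂ hT a (w.hom_eq_zero_of_wLE_of_wGE (by ring) hA h₃ _)
    rw [w.hom_eq_zero_of_wLE_of_wGE (by ring) hA h₁ g, zero_comp]
  obtain ⟨g, hg⟩ := Triangle.yoneda_exact₂ _ hAB (𝟙 T.obj₂) (by rw [ha]; exact zero_comp)
  exact w.isRetractClosed_wGE l _ _ b g hg.symm hB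

lemma isExtensionClosed_le : IsExtensionClosed w.le := fun T hT h₁ h₃ =>
  w.wLE_subset_le le_rfl
    (w.isExtensionClosed_wLE 0 T hT (w.le_subset_wLE le_rfl h₁) (w.le_subset_wLE le_rfl h₃))

lemma isExtensionClosed_ge : IsExtensionClosed w.ge := fun T hT h₁ h₃ =>
  w.wGE_subset_ge le_rfl (w.isExtensionClosed_wGE 0 T hT
    (mem_shiftedSet_zero (S := w.ge) h₁) (mem_shiftedSet_zero (S := w.ge) h₃))

variable [IsTriangulated C]

lemma withoutWeights_of_distTriang_comp {m n : ℤ} {X Y Z D : C} {f : X ⟶ Y} {g : Y ⟶ Z}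
    (hf : HasFiberIn (w.wLE (m - 1)) f) (hg : HasFiberIn (w.wGE (n + 1)) g)
    {dm : D ⟶ X} {dp : Z ⟶ D⟦(1:ℤ)⟧} (hD : Triangle.mk dm (f ≫ g) dp ∈ distTriang C) :
    w.WithoutWeights m n D := by
  obtain ⟨K, vK, wK, hK, hKw⟩ := hf
  obtain ⟨L, vL, wL, hL, hLw⟩ := hg
  have H := Triangulated.someOctahedron' rfl hK hL hD
  exact ⟨K, L, H.m₁, H.m₃, _, H.mem, hKw, hLw⟩

lemma exists_factorization_through_heart {m n : ℤ} (hm : m ≤ 0) (hn : 0 ≤ n + 1)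
    {C₀ Mm Mp : C} {vm : C₀ ⟶ Mm} {u : Mm ⟶ Mp} {vp : Mp ⟶ C₀⟦(1:ℤ)⟧}
    (hu : Triangle.mk vm u vp ∈ distTriang C) (hMm : Mm ∈ w.le) (hMp : Mp ∈ w.ge)
    (hC₀ : w.WithoutWeights m n C₀) :
    ∃ (E : C) (p : Mm ⟶ E) (q : E ⟶ Mp), p ≫ q = u ∧ E ∈ w.heart ∧
      HasFiberIn (w.wLE (m - 1)) p ∧ HasFiberIn (w.wGE (n + 1)) q := by
  obtain ⟨A, B, a, b, δ, hAB, hA, hB⟩ := hC₀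
  obtain ⟨E, p, wE, hE⟩ := distinguished_cocone_triangle (a ≫ vm)
  have H := Triangulated.someOctahedron rfl hAB hu hE
  have hA₁ : A⟦(1:ℤ)⟧ ∈ w.le := w.wLE_subset_le hm (shift_mem_shiftedSet_add hA 1 m (by ring))
  refine ⟨E, p, H.m₃, H.comm₃, ⟨?_, ?_⟩, ⟨A, _, _, hE, hA⟩, ⟨B, _, _, H.mem, hB⟩⟩
  · exact w.isExtensionClosed_le _ (rot_of_distTriang _ hE) hMm hA₁
  · exact w.isExtensionClosed_ge _ H.mem (w.wGE_subset_ge hn hB) hMp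

end WeightStructure

namespace TensorTriangulated

variable {C : Type u} [Category.{v} C] [Preadditive C] [HasZeroObject C]
  [HasShift C ℤ] [∀ n : ℤ, (shiftFunctor C n).Additive] [Pretriangulated C]
  (𝒯 : TensorTriangulated C)

instance (X : C) : (𝒯.T.obj X).CommShift ℤ := 𝒯.commR X

instance (Y : C) : (𝒯.T.flip.obj Y).CommShift ℤ := 𝒯.commL Y

instance (X : C) : (𝒯.T.obj X).IsTriangulated := ⟨fun _ hT => 𝒯.trR X _ _ _ _ _ _ hT⟩

instance (Y : C) : (𝒯.T.flip.obj Y).IsTriangulated := ⟨fun _ hT => 𝒯.trL Y _ _ _ _ _ _ hT⟩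

lemma tmul_comp {X Y Z X' Y' Z' : C} (f : X ⟶ Y) (g : Y ⟶ Z) (f' : X' ⟶ Y') (g' : Y' ⟶ Z') :
    𝒯.tmul (f ≫ g) (f' ≫ g') = 𝒯.tmul f f' ≫ 𝒯.tmul g g' := by
  simp only [tmul, Functor.map_comp, NatTrans.comp_app, Category.assoc, NatTrans.naturality_assoc]

lemma hasFiberIn_tmul [IsTriangulated C] {P : Set C}
    (hP : ∀ X Y : C, X ∈ P → Y ∈ P → (𝒯.T.obj X).obj Y ∈ P) {n : ℤ}
    (hext : IsExtensionClosed (shiftedSet P n)) {X Y X' Y' : C} {f : X ⟶ Y} {f' : X' ⟶ Y'}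
    (hX' : X' ∈ P) (hY : Y ∈ P) (hf : HasFiberIn (shiftedSet P n) f)
    (hf' : HasFiberIn (shiftedSet P n) f') : HasFiberIn (shiftedSet P n) (𝒯.tmul f f') :=
  (hf.map (𝒯.T.flip.obj X') fun _ => mem_shiftedSet_map _ fun Z hZ => hP Z X' hZ hX').comp hext
    (hf'.map (𝒯.T.obj Y) fun _ => mem_shiftedSet_map _ fun Z hZ => hP Y Z hY hZ)

end TensorTriangulated

/-- If the cones (shifted by `[-1]`) `C₀` of `u` and `C₀'` of `u'` are both without
weights `-1` and `0`, then so is the corresponding object `D` for `u ⊗ u'`. -/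
theorem withoutWeights_tensor
    {C : Type u} [Category.{v} C] [Preadditive C] [HasZeroObject C]
    [HasShift C ℤ] [∀ n : ℤ, (shiftFunctor C n).Additive] [Pretriangulated C]
    [IsTriangulated C]
    (𝒯 : TensorTriangulated C) (w : WeightStructure C) (hcomp : 𝒯.Compatible w)
    (Mm Mp Mm' Mp' C₀ C₀' D : C)
    (u : Mm ⟶ Mp) (u' : Mm' ⟶ Mp')
    (hMm : Mm ∈ w.le) (hMp : Mp ∈ w.ge) (hMm' : Mm' ∈ w.le) (hMp' : Mp' ∈ w.ge)
    (vm : C₀ ⟶ Mm) (vp : Mp ⟶ C₀⟦(1:ℤ)⟧)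
    (hu : Triangle.mk vm u vp ∈ distTriang C)
    (vm' : C₀' ⟶ Mm') (vp' : Mp' ⟶ C₀'⟦(1:ℤ)⟧)
    (hu' : Triangle.mk vm' u' vp' ∈ distTriang C)
    (hC₀ : w.WithoutWeights (-1) 0 C₀) (hC₀' : w.WithoutWeights (-1) 0 C₀')
    (dm : D ⟶ (𝒯.T.obj Mm).obj Mm') (dp : (𝒯.T.obj Mp).obj Mp' ⟶ D⟦(1:ℤ)⟧)
    (hD : Triangle.mk dm (𝒯.tmul u u') dp ∈ distTriang C) :
    w.WithoutWeights (-1) 0 D := by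
  obtain ⟨E, p, q, rfl, ⟨hE, -⟩, hp, hq⟩ :=
    w.exists_factorization_through_heart (by norm_num) (by norm_num) hu hMm hMp hC₀
  obtain ⟨E', p', q', rfl, ⟨-, hE'⟩, hp', hq'⟩ :=
    w.exists_factorization_through_heart (by norm_num) (by norm_num) hu' hMm' hMp' hC₀'
  rw [𝒯.tmul_comp] at hD
  exact w.withoutWeights_of_distTriang_comp
    (𝒯.hasFiberIn_tmul hcomp.1 (w.isExtensionClosed_wLE _) hMm' hE hp hp')
    (𝒯.hasFiberIn_tmul hcomp.2 (w.isExtensionClosed_wGE _) hE' hMp hq hq') hD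
end

section
/- Let C be a triangulated category with a weight structure w, and let M be an object admitting a weight filtration M_{≤-2} →a M →b M_{≥0} →c M_{≤-2}[1] avoiding weight -1 (M_{≤-2} ∈ C_{w≤-2}, M_{≥0} ∈ C_{w≥0}). Then every weight filtration A → M → B → A[1] of M with A ∈ C_{w≤-1} and B ∈ C_{w≥0} is isomorphic, via an isomorphism of triangles extending the identity of M, to the direct sum of the triangle M_{≤-2} →a M →b M_{≥0} →c M_{≤-2}[1] and a contractible triangle M₀[-1] → 0 → M₀ →id M₀ for some object M₀ of the heart C_{w=0}. -/
open CategoryTheory CategoryTheory.Limits CategoryTheory.Pretriangulated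

universe v u

/-! Comparing the two filtrations of `M` gives morphisms of triangles in both directions
extending `𝟙 M`, since orthogonality kills `A ⟶ B₀` and `A₂ ⟶ B`; orthogonality of `A₂⟦1⟧`
and `B₀` then forces the composite `B₀ ⟶ B ⟶ B₀` to be the identity. Hence `B ≅ B₀ ⊞ M₀`,
where `M₀` is the cone of `B₀ ⟶ B`, and the comparison morphism from the second filtration to
the sum of the first one with the contractible triangle `M₀⟦-1⟧ ⟶ 0 ⟶ M₀` is an isomorphism
on the last two terms, hence an isomorphism. Finally `M₀` lies in the heart: it is a summand
of `B ∈ C_{w≥0}`, and `M₀⟦-1⟧` is a summand of `A ∈ C_{w≤-1}`. -/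

namespace shiftedSet

variable {C : Type u} [Category.{v} C] [HasShift C ℤ] {S : Set C}

lemma mem_of_iso {X Y : C} {n : ℤ} (e : X ≅ Y) (h : Y ∈ shiftedSet S n) : X ∈ shiftedSet S n := by
  obtain ⟨A, hA, ⟨e'⟩⟩ := h
  exact ⟨A, hA, ⟨e ≪≫ e'⟩⟩

lemma shift_mem {X : C} {m : ℤ} (h : X ∈ shiftedSet S m) (k n : ℤ) (hn : m + k = n) :
    X⟦k⟧ ∈ shiftedSet S n := by
  obtain ⟨A, hA, ⟨e⟩⟩ := h
  exact ⟨A, hA, ⟨(shiftFunctor C k).mapIso e ≪≫ (shiftFunctorAdd' C m k n hn).symm.app A⟩⟩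

lemma mem_of_shift_mem {X : C} {k m : ℤ} (h : X⟦k⟧ ∈ shiftedSet S m) (n : ℤ) (hn : m = n + k) :
    X ∈ shiftedSet S n :=
  mem_of_iso ((shiftFunctorCompIsoId C k (-k) (by omega)).symm.app X)
    (shift_mem h (-k) n (by omega))

lemma mem_zero_iff (hS : ∀ ⦃X Y : C⦄, (X ≅ Y) → Y ∈ S → X ∈ S) {X : C} :
    X ∈ shiftedSet S 0 ↔ X ∈ S :=
  ⟨fun ⟨_, hA, ⟨e⟩⟩ => hS (e ≪≫ (shiftFunctorZero C ℤ).app _) hA,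
    fun hX => ⟨X, hX, ⟨((shiftFunctorZero C ℤ).app X).symm⟩⟩⟩

lemma mem_of_retract (hS : ∀ ⦃X Y : C⦄, Retract X Y → Y ∈ S → X ∈ S) {X Y : C} {n : ℤ}
    (r : Retract X Y) (h : Y ∈ shiftedSet S n) : X ∈ shiftedSet S n := by
  have hS' : ∀ ⦃X Y : C⦄, (X ≅ Y) → Y ∈ S → X ∈ S := fun _ _ e => hS (Retract.ofIso e)
  have hY : Y⟦-n⟧ ∈ S := (mem_zero_iff hS').1 (shift_mem h (-n) 0 (by omega))
  exact mem_of_shift_mem ((mem_zero_iff hS').2 (hS (r.map (shiftFunctor C (-n))) hY)) n (by omega)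

end shiftedSet

section

variable {C : Type u} [Category.{v} C] [Preadditive C] [HasZeroObject C]
  [HasShift C ℤ] [∀ n : ℤ, (shiftFunctor C n).Additive] [Pretriangulated C]

open ZeroObject

lemma exists_triangle_hom_of_comp_eq_zero {A A' M B B' : C} {a : A ⟶ M} {b : M ⟶ B}
    {c : B ⟶ A⟦(1:ℤ)⟧} {a' : A' ⟶ M} {b' : M ⟶ B'} {c' : B' ⟶ A'⟦(1:ℤ)⟧}
    (hT : Triangle.mk a b c ∈ distTriang C) (hT' : Triangle.mk a' b' c' ∈ distTriang C)
    (h : a' ≫ b = 0) :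
    ∃ (f : A' ⟶ A) (g : B' ⟶ B), a' = f ≫ a ∧ b' ≫ g = b ∧ c' ≫ f⟦(1:ℤ)⟧' = g ≫ c := by
  obtain ⟨f, hf⟩ := Triangle.coyoneda_exact₂ _ hT a' h
  obtain ⟨g, hg, hc⟩ :=
    complete_distinguished_triangle_morphism _ _ hT' hT f (𝟙 M) ((Category.comp_id a').trans hf)
  exact ⟨f, g, hf, hg.trans (Category.id_comp b), hc⟩

lemma eq_of_mor₂_comp_eq (T : Triangle C) (hT : T ∈ distTriang C) {X : C}
    (hX : ∀ k : T.obj₁⟦(1:ℤ)⟧ ⟶ X, k = 0) {φ ψ : T.obj₃ ⟶ X}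
    (h : T.mor₂ ≫ φ = T.mor₂ ≫ ψ) : φ = ψ := by
  obtain ⟨k, hk⟩ := T.yoneda_exact₃ hT (φ - ψ) (by rw [Preadditive.comp_sub, h, sub_self])
  rw [← sub_eq_zero, hk, hX k, comp_zero]

lemma isIso_biprod_lift_of_distTriang {X Y Z : C} {g : X ⟶ Y} {p : Y ⟶ Z}
    {δ : Z ⟶ X⟦(1:ℤ)⟧} (hT : Triangle.mk g p δ ∈ distTriang C) {r : Y ⟶ X}
    (hr : g ≫ r = 𝟙 X) : IsIso (biprod.lift r p) := by
  have : IsSplitMono g := ⟨⟨r, hr⟩⟩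
  have hδ : δ = 0 := Triangle.mor₃_eq_zero_of_mono₁ _ hT (inferInstanceAs (Mono g))
  have hgp : g ≫ p = 0 := comp_distTriang_mor_zero₁₂ _ hT
  let φ : Triangle.mk g p δ ⟶ binaryBiproductTriangle X Z :=
    Triangle.homMk _ _ (𝟙 X) (biprod.lift r p) (𝟙 Z)
      (show g ≫ biprod.lift r p = 𝟙 X ≫ biprod.inl by
        apply biprod.hom_ext <;> simp [hr, hgp])
      (show p ≫ 𝟙 Z = biprod.lift r p ≫ biprod.snd by simp)
      (show δ ≫ (𝟙 X)⟦(1:ℤ)⟧' = 𝟙 Z ≫ 0 by simp [hδ])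
  exact isIso₂_of_isIso₁₃ φ hT (binaryBiproductTriangle_distinguished X Z)
    (inferInstanceAs (IsIso (𝟙 X))) (inferInstanceAs (IsIso (𝟙 Z)))

open WalkingPair in
noncomputable def piWalkingPairIsoBiprod (f : WalkingPair → C) : ∏ᶜ f ≅ f left ⊞ f right where
  hom := biprod.lift (Pi.π f left) (Pi.π f right)
  inv := Pi.lift fun j => WalkingPair.casesOn j biprod.fst biprod.snd
  hom_inv_id := by
    apply Pi.hom_ext
    rintro (_ | _) <;> simp
  inv_hom_id := by
    apply biprod.hom_ext <;> simp

lemma biprod_triangle_distinguished (T₁ T₂ : Triangle C)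
    (h₁ : T₁ ∈ distTriang C) (h₂ : T₂ ∈ distTriang C) :
    Triangle.mk (biprod.map T₁.mor₁ T₂.mor₁) (biprod.map T₁.mor₂ T₂.mor₂)
      (biprod.desc (T₁.mor₃ ≫ biprod.inl⟦(1:ℤ)⟧') (T₂.mor₃ ≫ biprod.inr⟦(1:ℤ)⟧')) ∈
      distTriang C := by
  let T : WalkingPair → Triangle C := fun j => WalkingPair.casesOn j T₁ T₂
  refine isomorphic_distinguished _
    (productTriangle_distinguished T (by rintro (_ | _) <;> assumption)) _
    (Triangle.isoMk _ _ (piWalkingPairIsoBiprod fun j => (T j).obj₁).symm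
      (piWalkingPairIsoBiprod fun j => (T j).obj₂).symm
      (piWalkingPairIsoBiprod fun j => (T j).obj₃).symm ?_ ?_ ?_)
  · show biprod.map T₁.mor₁ T₂.mor₁ ≫ (piWalkingPairIsoBiprod fun j => (T j).obj₂).inv =
      (piWalkingPairIsoBiprod fun j => (T j).obj₁).inv ≫ Limits.Pi.map fun j => (T j).mor₁
    apply Pi.hom_ext
    rintro (_ | _) <;> simp [T, piWalkingPairIsoBiprod]
  · show biprod.map T₁.mor₂ T₂.mor₂ ≫ (piWalkingPairIsoBiprod fun j => (T j).obj₃).inv =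
      (piWalkingPairIsoBiprod fun j => (T j).obj₂).inv ≫ Limits.Pi.map fun j => (T j).mor₂
    apply Pi.hom_ext
    rintro (_ | _) <;> simp [T, piWalkingPairIsoBiprod]
  · show biprod.desc (T₁.mor₃ ≫ biprod.inl⟦(1:ℤ)⟧') (T₂.mor₃ ≫ biprod.inr⟦(1:ℤ)⟧') ≫
        (piWalkingPairIsoBiprod fun j => (T j).obj₁).inv⟦(1:ℤ)⟧' =
      (piWalkingPairIsoBiprod fun j => (T j).obj₃).inv ≫
        Limits.Pi.map (fun j => (T j).mor₃) ≫ inv (piComparison _ _)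
    rw [← cancel_mono (piComparison (shiftFunctor C (1:ℤ)) fun j => (T j).obj₁),
      Category.assoc, Category.assoc, Category.assoc, IsIso.inv_hom_id, Category.comp_id]
    apply Pi.hom_ext
    rintro (_ | _) <;>
    · simp only [Category.assoc, piComparison_comp_π, ← Functor.map_comp]
      apply biprod.hom_ext' <;> simp [T, piWalkingPairIsoBiprod, ← Functor.map_comp]

lemma contractible_shift_neg_one_distinguished (X : C) :
    Triangle.mk (0 : X⟦(-1:ℤ)⟧ ⟶ 0) (0 : 0 ⟶ X)
      ((shiftFunctorCompIsoId C (-1 : ℤ) 1 (by norm_num)).inv.app X) ∈ distTriang C :=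
  isomorphic_distinguished _ (inv_rot_of_distTriang _ (contractible_distinguished₁ X)) _
    (Triangle.isoMk _ _ (Iso.refl _) (Iso.refl _) (Iso.refl _)
      ((isZero_zero C).eq_of_tgt _ _) ((isZero_zero C).eq_of_src _ _)
      (show (shiftFunctorCompIsoId C (-1 : ℤ) 1 (by norm_num)).inv.app X ≫
          (𝟙 (X⟦(-1:ℤ)⟧))⟦(1:ℤ)⟧' = 𝟙 X ≫ 𝟙 X ≫ (shiftEquiv C (1:ℤ)).counitIso.inv.app X by
        simp))

lemma biprod_contractible_triangle_distinguished {A M B : C} {a : A ⟶ M} {b : M ⟶ B}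
    {c : B ⟶ A⟦(1:ℤ)⟧} (hT : Triangle.mk a b c ∈ distTriang C) (X : C) :
    Triangle.mk (biprod.desc a (0 : X⟦(-1:ℤ)⟧ ⟶ M)) (biprod.lift b (0 : M ⟶ X))
      (biprod.desc (c ≫ biprod.inl⟦(1:ℤ)⟧')
        ((shiftFunctorCompIsoId C (-1 : ℤ) 1 (by norm_num)).inv.app X ≫ biprod.inr⟦(1:ℤ)⟧')) ∈
      distTriang C :=
  isomorphic_distinguished _
    (biprod_triangle_distinguished _ _ hT (contractible_shift_neg_one_distinguished X)) _
    (Triangle.isoMk _ _ (Iso.refl _) (isoBiprodZero (isZero_zero C)) (Iso.refl _)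
      (show biprod.desc a 0 ≫ biprod.inl = 𝟙 _ ≫ biprod.map a 0 by
        apply biprod.hom_ext' <;> simp)
      (show biprod.lift b 0 ≫ 𝟙 _ = biprod.inl ≫ biprod.map b 0 by
        apply biprod.hom_ext <;> simp)
      (show biprod.desc (c ≫ biprod.inl⟦(1:ℤ)⟧') (_ ≫ biprod.inr⟦(1:ℤ)⟧') ≫
          (𝟙 (A ⊞ X⟦(-1:ℤ)⟧))⟦(1:ℤ)⟧' =
          𝟙 (B ⊞ X) ≫ biprod.desc (c ≫ biprod.inl⟦(1:ℤ)⟧') (_ ≫ biprod.inr⟦(1:ℤ)⟧') by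
        simp))

theorem exists_iso_biprod_contractible_of_splitting {A₂ A M B₀ B : C}
    {a : A₂ ⟶ M} {b : M ⟶ B₀} {c : B₀ ⟶ A₂⟦(1:ℤ)⟧} {a' : A ⟶ M} {b' : M ⟶ B}
    {c' : B ⟶ A⟦(1:ℤ)⟧} (hT : Triangle.mk a b c ∈ distTriang C)
    (hT' : Triangle.mk a' b' c' ∈ distTriang C) {f' : A ⟶ A₂} {g' : B ⟶ B₀}
    (hf' : a' = f' ≫ a) (hg' : b' ≫ g' = b) (hc' : c' ≫ f'⟦(1:ℤ)⟧' = g' ≫ c)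
    {g : B₀ ⟶ B} (hg : b ≫ g = b') (hgg' : g ≫ g' = 𝟙 B₀) :
    ∃ (M₀ : C) (eA : A ≅ A₂ ⊞ (M₀⟦(-1:ℤ)⟧)) (eB : B ≅ B₀ ⊞ M₀),
      a' = eA.hom ≫ biprod.desc a 0 ∧
      b' ≫ eB.hom = biprod.lift b 0 ∧
      c' ≫ eA.hom⟦(1:ℤ)⟧' =
        eB.hom ≫ biprod.desc (c ≫ biprod.inl⟦(1:ℤ)⟧')
          ((shiftFunctorCompIsoId C (-1 : ℤ) (1 : ℤ) (by norm_num)).inv.app M₀ ≫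
            biprod.inr⟦(1:ℤ)⟧') := by
  obtain ⟨M₀, p, δ, hTg⟩ := distinguished_cocone_triangle g
  have : IsIso (biprod.lift g' p) := isIso_biprod_lift_of_distTriang hTg hgg'
  have hgp : g ≫ p = 0 := comp_distTriang_mor_zero₁₂ _ hTg
  have hb'p : b' ≫ p = 0 := by rw [← hg, Category.assoc, hgp, comp_zero]
  obtain ⟨s, hs⟩ : ∃ s : A⟦(1:ℤ)⟧ ⟶ M₀, p = c' ≫ s := Triangle.yoneda_exact₃ _ hT' p hb'p
  let ε := (shiftFunctorCompIsoId C (-1 : ℤ) (1 : ℤ) (by norm_num)).inv.app M₀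
  let q : A ⟶ M₀⟦(-1:ℤ)⟧ := (shiftFunctor C (1:ℤ)).preimage (s ≫ ε)
  have hq : c' ≫ q⟦(1:ℤ)⟧' = p ≫ ε := by simp [q, hs, Category.assoc]
  have comm₁ : a' = biprod.lift f' q ≫ biprod.desc a 0 := by simp [hf']
  have comm₂ : b' ≫ biprod.lift g' p = biprod.lift b 0 := by
    apply biprod.hom_ext <;> simp [hg', hb'p]
  have comm₃ : c' ≫ (biprod.lift f' q)⟦(1:ℤ)⟧' =
      biprod.lift g' p ≫ biprod.desc (c ≫ biprod.inl⟦(1:ℤ)⟧') (ε ≫ biprod.inr⟦(1:ℤ)⟧') := by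
    rw [biprod.lift_desc, biprod.lift_eq, Functor.map_add, Functor.map_comp, Functor.map_comp,
      Preadditive.comp_add, reassoc_of% hc', reassoc_of% hq]
  let φ := Triangle.homMk (Triangle.mk a' b' c')
    (Triangle.mk (biprod.desc a (0 : M₀⟦(-1:ℤ)⟧ ⟶ M)) (biprod.lift b (0 : M ⟶ M₀))
      (biprod.desc (c ≫ biprod.inl⟦(1:ℤ)⟧') (ε ≫ biprod.inr⟦(1:ℤ)⟧')))
    (biprod.lift f' q) (𝟙 M) (biprod.lift g' p) ((Category.comp_id a').trans comm₁)
    (comm₂.trans (Category.id_comp _).symm) comm₃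
  have : IsIso (biprod.lift f' q) := isIso₁_of_isIso₂₃ φ hT'
    (biprod_contractible_triangle_distinguished hT M₀) (inferInstanceAs (IsIso (𝟙 M)))
    (inferInstanceAs (IsIso (biprod.lift g' p)))
  exact ⟨M₀, asIso (biprod.lift f' q), asIso (biprod.lift g' p), comm₁, comm₂, comm₃⟩

end

namespace WeightStructure

variable {C : Type u} [Category.{v} C] [Preadditive C] [HasZeroObject C]
  [HasShift C ℤ] [∀ n : ℤ, (shiftFunctor C n).Additive] [Pretriangulated C]
  (w : WeightStructure C)

lemma mem_le_of_retract {X Y : C} (r : Retract X Y) (h : Y ∈ w.le) : X ∈ w.le :=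
  w.retract_le X Y r.i r.r r.retract h

lemma mem_ge_of_retract {X Y : C} (r : Retract X Y) (h : Y ∈ w.ge) : X ∈ w.ge :=
  w.retract_ge X Y r.i r.r r.retract h

lemma mem_wLE_of_retract {X Y : C} {n : ℤ} (r : Retract X Y) (h : Y ∈ w.wLE n) : X ∈ w.wLE n :=
  shiftedSet.mem_of_retract (fun _ _ => w.mem_le_of_retract) r h

lemma mem_wLE_zero_iff {X : C} : X ∈ w.wLE 0 ↔ X ∈ w.le :=
  shiftedSet.mem_zero_iff fun _ _ e => w.mem_le_of_retract (Retract.ofIso e)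

lemma mem_wGE_zero_iff {X : C} : X ∈ w.wGE 0 ↔ X ∈ w.ge :=
  shiftedSet.mem_zero_iff fun _ _ e => w.mem_ge_of_retract (Retract.ofIso e)

lemma shift_mem_ge {X : C} (h : X ∈ w.ge) {k : ℤ} (hk : 0 ≤ k) : X⟦k⟧ ∈ w.ge := by
  lift k to ℕ using hk
  induction k with
  | zero => exact w.mem_ge_of_retract (Retract.ofIso ((shiftFunctorZero C ℤ).app X)) h
  | succ k ih =>
    exact w.mem_ge_of_retract (Retract.ofIso ((shiftFunctorAdd' C (k : ℤ) 1 (k + 1) rfl).app X))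
      (w.ge_shift ⟨_, ih, ⟨Iso.refl _⟩⟩)

lemma wGE_antitone : Antitone w.wGE := by
  rintro m n h Y ⟨G, hG, ⟨e⟩⟩
  exact ⟨G⟦n - m⟧, w.shift_mem_ge hG (by omega),
    ⟨e ≪≫ (shiftFunctorAdd' C (n - m) m n (by omega)).app G⟩⟩

lemma hom_eq_zero_of_lt {X Y : C} {m n : ℤ} (hX : X ∈ w.wLE m) (hY : Y ∈ w.wGE n) (hmn : m < n)
    (φ : X ⟶ Y) : φ = 0 := by
  have hX' : X⟦-m⟧ ∈ w.le := w.mem_wLE_zero_iff.1 (shiftedSet.shift_mem hX (-m) 0 (by omega))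
  have hY' : Y⟦-m⟧ ∈ w.wGE 1 :=
    w.wGE_antitone (by omega) (shiftedSet.shift_mem hY (-m) (n - m) (by omega))
  exact (shiftFunctor C (-m)).map_eq_zero_iff.1 (w.orth _ _ hX' hY' _)

end WeightStructure

/-- Minimality of a weight filtration avoiding weight `-1`: any weight filtration of `M`
at the cut `(-1, 0)` is isomorphic, by an isomorphism of triangles extending `𝟙 M`, to the
direct sum of the given filtration avoiding weight `-1` and a contractible triangle
`M₀⟦-1⟧ ⟶ 0 ⟶ M₀ ⟶ M₀` for some object `M₀` of the heart. -/
theorem weightFiltration_isoDirectSum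
    {C : Type u} [Category.{v} C] [Preadditive C] [HasZeroObject C]
    [HasShift C ℤ] [∀ n : ℤ, (shiftFunctor C n).Additive] [Pretriangulated C]
    (w : WeightStructure C) (M A₂ B₀ : C)
    (a : A₂ ⟶ M) (b : M ⟶ B₀) (c : B₀ ⟶ A₂⟦(1:ℤ)⟧)
    (hT : Triangle.mk a b c ∈ distTriang C)
    (hA₂ : A₂ ∈ w.wLE (-2)) (hB₀ : B₀ ∈ w.ge)
    (A B : C) (a' : A ⟶ M) (b' : M ⟶ B) (c' : B ⟶ A⟦(1:ℤ)⟧)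
    (hT' : Triangle.mk a' b' c' ∈ distTriang C)
    (hA : A ∈ w.wLE (-1)) (hB : B ∈ w.ge) :
    ∃ (M₀ : C) (_ : M₀ ∈ w.heart)
      (eA : A ≅ A₂ ⊞ (M₀⟦(-1:ℤ)⟧)) (eB : B ≅ B₀ ⊞ M₀),
      a' = eA.hom ≫ biprod.desc a 0 ∧
      b' ≫ eB.hom = biprod.lift b 0 ∧
      c' ≫ (shiftFunctor C (1:ℤ)).map eA.hom =
        eB.hom ≫ biprod.desc (c ≫ (shiftFunctor C (1:ℤ)).map biprod.inl)
          ((shiftFunctorCompIsoId C (-1 : ℤ) (1 : ℤ) (by norm_num)).inv.app M₀ ≫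
            (shiftFunctor C (1:ℤ)).map biprod.inr) := by
  have hB₀' : B₀ ∈ w.wGE 0 := w.mem_wGE_zero_iff.2 hB₀
  obtain ⟨f', g', hf', hg', hc'⟩ := exists_triangle_hom_of_comp_eq_zero hT hT'
    (w.hom_eq_zero_of_lt hA hB₀' (by norm_num) _)
  obtain ⟨-, g, -, hg, -⟩ := exists_triangle_hom_of_comp_eq_zero hT' hT
    (w.hom_eq_zero_of_lt hA₂ (w.mem_wGE_zero_iff.2 hB) (by norm_num) _)
  have hgg' : g ≫ g' = 𝟙 B₀ := eq_of_mor₂_comp_eq _ hT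
    (w.hom_eq_zero_of_lt (shiftedSet.shift_mem hA₂ 1 (-1) (by norm_num)) hB₀' (by norm_num))
    (show b ≫ g ≫ g' = b ≫ 𝟙 B₀ by rw [reassoc_of% hg, hg', Category.comp_id])
  obtain ⟨M₀, eA, eB, h₁, h₂, h₃⟩ :=
    exists_iso_biprod_contractible_of_splitting hT hT' hf' hg' hc' hg hgg'
  have hM₀ : M₀⟦(-1:ℤ)⟧ ∈ w.wLE (-1) :=
    w.mem_wLE_of_retract ⟨biprod.inr ≫ eA.inv, eA.hom ≫ biprod.snd, by simp⟩ hA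
  refine ⟨M₀, ⟨?_, w.mem_ge_of_retract ⟨biprod.inr ≫ eB.inv, eB.hom ≫ biprod.snd, by simp⟩ hB⟩,
    eA, eB, h₁, h₂, h₃⟩
  exact w.mem_wLE_zero_iff.1 (shiftedSet.mem_of_shift_mem hM₀ 0 (by norm_num))
end

section
/- Let C be a triangulated category (satisfying the octahedron axiom) with a weight structure w. Fix a morphism u : M_- → M_+ with M_- ∈ C_{w≤0} and M_+ ∈ C_{w≥0}, and a distinguished triangle C₀ → M_- →u M_+ → C₀[1]. Suppose: (i) M_- admits a weight filtration A → M_- →π₀ G_- → A[1] avoiding weight -1 (A ∈ C_{w≤-2}, G_- ∈ C_{w=0}); (ii) M_+ admits a weight filtration G_+ →i₀ M_+ → B → G_+[1] avoiding weight 1 (G_+ ∈ C_{w=0}, B ∈ C_{w≥2}); (iii) there exists an isomorphism φ : G_- → G_+ with i₀ ∘ φ ∘ π₀ = u. Then C₀ is without weights -1 and 0, i.e., C₀ admits a weight filtration C_{≤-2} → C₀ → C_{≥1} → C_{≤-2}[1] with C_{≤-2} ∈ C_{w≤-2} and C_{≥1} ∈ C_{w≥1}. -/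
open CategoryTheory CategoryTheory.Limits CategoryTheory.Pretriangulated

universe v u

/-! An octahedron on `u = (π₀ ≫ φ) ≫ i₀` compares the three cones: those of `π₀ ≫ φ` and `i₀` are
`A` and `B⟦-1⟧`, that of `u` is `C₀`, so it yields a distinguished triangle `A ⟶ C₀ ⟶ B⟦-1⟧ ⟶ A⟦1⟧`,
which is the required weight filtration since `A ∈ C_{w ≤ -2}` and `B⟦-1⟧ ∈ C_{w ≥ 1}`. -/

lemma shift_mem_shiftedSet_s15 {C : Type u} [Category.{v} C] [HasShift C ℤ] {S : Set C} {n : ℤ} {X : C}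
    (hX : X ∈ shiftedSet S n) (m p : ℤ) (h : n + m = p) : X⟦m⟧ ∈ shiftedSet S p := by
  obtain ⟨A, hA, ⟨e⟩⟩ := hX
  exact ⟨A, hA, ⟨(shiftFunctor C m).mapIso e ≪≫ ((shiftFunctorAdd' C n m p h).app A).symm⟩⟩

lemma CategoryTheory.Pretriangulated.distinguished_mk_comp_iso {C : Type u} [Category.{v} C]
    [Preadditive C] [HasZeroObject C] [HasShift C ℤ] [∀ n : ℤ, (shiftFunctor C n).Additive]
    [Pretriangulated C]
    {X Y Z Z' : C} {f : X ⟶ Y} {g : Y ⟶ Z} {h : Z ⟶ X⟦(1:ℤ)⟧}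
    (hT : Triangle.mk f g h ∈ distTriang C) (e : Z ≅ Z') :
    Triangle.mk f (g ≫ e.hom) (e.inv ≫ h) ∈ distTriang C :=
  isomorphic_distinguished _ hT _ (Triangle.isoMk _ _ (Iso.refl _) (Iso.refl _) e.symm
    ((Category.comp_id _).trans (Category.id_comp _).symm)
    ((Category.assoc _ _ _).trans ((congrArg _ e.hom_inv_id).trans
      ((Category.comp_id _).trans (Category.id_comp _).symm)))
    ((congrArg _ (CategoryTheory.Functor.map_id _ _)).trans (Category.comp_id _)))

/-- Converse to the main theorem: if `u : M₋ ⟶ M₊` admits a factorization `u = i₀ ∘ φ ∘ π₀`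
with `φ` an isomorphism, where `π₀` is the quotient of a weight filtration of `M₋` avoiding
weight `-1` and `i₀` is the subobject of a weight filtration of `M₊` avoiding weight `1`,
then any cone-shift `C₀` of `u` is without weights `-1` and `0`. -/
theorem withoutWeights_of_factorization
    {C : Type u} [Category.{v} C] [Preadditive C] [HasZeroObject C]
    [HasShift C ℤ] [∀ n : ℤ, (shiftFunctor C n).Additive] [Pretriangulated C]
    [IsTriangulated C]
    (w : WeightStructure C) (Mm Mp C₀ : C) (u : Mm ⟶ Mp)
    (hMm : Mm ∈ w.le) (hMp : Mp ∈ w.ge)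
    (vm : C₀ ⟶ Mm) (vp : Mp ⟶ C₀⟦(1:ℤ)⟧)
    (hu : Triangle.mk vm u vp ∈ distTriang C)
    (A Gm : C) (a : A ⟶ Mm) (π₀ : Mm ⟶ Gm) (δm : Gm ⟶ A⟦(1:ℤ)⟧)
    (hTm : Triangle.mk a π₀ δm ∈ distTriang C)
    (hA : A ∈ w.wLE (-2)) (hGm : Gm ∈ w.heart)
    (Gp B : C) (i₀ : Gp ⟶ Mp) (b : Mp ⟶ B) (δp : B ⟶ Gp⟦(1:ℤ)⟧)
    (hTp : Triangle.mk i₀ b δp ∈ distTriang C)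
    (hGp : Gp ∈ w.heart) (hB : B ∈ w.wGE 2)
    (φ : Gm ⟶ Gp) (hφ : IsIso φ) (hfac : π₀ ≫ φ ≫ i₀ = u) :
    w.WithoutWeights (-1) 0 C₀ := by
  have hfac' : (π₀ ≫ φ) ≫ i₀ = u := by rw [Category.assoc, hfac]
  let o := Triangulated.someOctahedron' hfac'
    (distinguished_mk_comp_iso hTm (@asIso _ _ _ _ φ hφ)) (inv_rot_of_distTriang _ hTp) hu
  exact ⟨_, _, _, _, _, o.mem, hA, shift_mem_shiftedSet_s15 hB (-1) 1 (by norm_num)⟩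
end

section
/- Let C be a triangulated category with a weight structure w, and let m, n be integers with m ≤ n. Suppose M admits a weight filtration M_{≤m-1} →x_- M →x_+ M_{≥n+1} → M_{≤m-1}[1] avoiding weights m,…,n, and N admits a weight filtration N_{≤m-1} →y_- N →y_+ N_{≥n+1} → N_{≤m-1}[1] avoiding weights m,…,n. Then for every morphism α : M → N: (i) the composition y_+ ∘ α ∘ x_- : M_{≤m-1} → N_{≥n+1} is zero; (ii) α ∘ x_- factors uniquely through y_- (there is a unique β : M_{≤m-1} → N_{≤m-1} with y_- ∘ β = α ∘ x_-); and (iii) y_+ ∘ α factors uniquely through x_+ (there is a unique γ : M_{≥n+1} → N_{≥n+1} with γ ∘ x_+ = y_+ ∘ α). -/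
open CategoryTheory CategoryTheory.Limits CategoryTheory.Pretriangulated

universe v u

/-! The gap between the weights `≤ m - 1` and `≥ n + 1` of the two filtrations makes every
relevant Hom group vanish by orthogonality: `xm ≫ α ≫ yp` lands in one of them, so the long exact
Hom sequences of the two triangles produce `β` and `γ`, and these are unique because the maps
from `MA` to `NB⟦-1⟧` (weights `≥ n > m - 1`) and from `MA⟦1⟧` (weights `≤ m < n + 1`) to `NB`
vanish as well. -/

namespace CategoryTheory.Pretriangulated

variable {C : Type u} [Category.{v} C] [Preadditive C] [HasZeroObject C]
  [HasShift C ℤ] [∀ n : ℤ, (shiftFunctor C n).Additive] [Pretriangulated C]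
  (T : Triangle C)

lemma existsUnique_lift_of_distTriang (hT : T ∈ distTriang C) {X : C}
    (f : X ⟶ T.obj₂) (hf : f ≫ T.mor₂ = 0)
    (h : ∀ g : X ⟶ T.obj₃⟦(-1 : ℤ)⟧, g = 0) : ∃! β : X ⟶ T.obj₁, β ≫ T.mor₁ = f := by
  obtain ⟨β, hβ⟩ := T.coyoneda_exact₂ hT f hf
  refine ⟨β, hβ.symm, fun β' (hβ' : β' ≫ T.mor₁ = f) => ?_⟩
  obtain ⟨g, hg⟩ := T.invRotate.coyoneda_exact₂ (inv_rot_of_distTriang _ hT) (β' - β)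
    (show (β' - β) ≫ T.mor₁ = 0 by rw [Preadditive.sub_comp, hβ', hβ, sub_self])
  rw [← sub_eq_zero, hg, h g]
  exact zero_comp

lemma existsUnique_desc_of_distTriang (hT : T ∈ distTriang C) {Y : C}
    (f : T.obj₂ ⟶ Y) (hf : T.mor₁ ≫ f = 0)
    (h : ∀ g : T.obj₁⟦(1 : ℤ)⟧ ⟶ Y, g = 0) : ∃! γ : T.obj₃ ⟶ Y, T.mor₂ ≫ γ = f := by
  obtain ⟨γ, hγ⟩ := T.yoneda_exact₂ hT f hf
  refine ⟨γ, hγ.symm, fun γ' (hγ' : T.mor₂ ≫ γ' = f) => ?_⟩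
  obtain ⟨g, hg⟩ := T.yoneda_exact₃ hT (γ' - γ)
    (by rw [Preadditive.comp_sub, hγ', ← hγ, sub_self])
  rw [← sub_eq_zero, hg, h g]
  exact comp_zero

end CategoryTheory.Pretriangulated

lemma shiftedSet_shift {C : Type u} [Category.{v} C] [HasShift C ℤ] {S : Set C} {a k c : ℤ}
    (h : a + k = c) {X : C} (hX : X ∈ shiftedSet S a) : X⟦k⟧ ∈ shiftedSet S c := by
  obtain ⟨A, hA, ⟨e⟩⟩ := hX
  exact ⟨A, hA, ⟨(shiftFunctor C k).mapIso e ≪≫ (shiftFunctorAdd' C a k c h).symm.app A⟩⟩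

namespace WeightStructure

variable {C : Type u} [Category.{v} C] [Preadditive C] [HasZeroObject C]
  [HasShift C ℤ] [∀ n : ℤ, (shiftFunctor C n).Additive] [Pretriangulated C]
  (w : WeightStructure C)

lemma mem_le_of_mem_wLE_zero {X : C} (hX : X ∈ w.wLE 0) : X ∈ w.le := by
  obtain ⟨A, hA, ⟨e⟩⟩ := hX
  let e' : X ≅ A := e ≪≫ (shiftFunctorZero C ℤ).app A
  exact w.retract_le X A e'.hom e'.inv e'.hom_inv_id hA

lemma shift_mem_ge_s16 {B : C} (hB : B ∈ w.ge) (k : ℕ) : B⟦(k : ℤ)⟧ ∈ w.ge := by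
  induction k with
  | zero =>
    let e : B⟦((0 : ℕ) : ℤ)⟧ ≅ B := (shiftFunctorZero C ℤ).app B
    exact w.retract_ge _ B e.hom e.inv e.hom_inv_id hB
  | succ k ih =>
    exact w.ge_shift ⟨B⟦(k : ℤ)⟧, ih,
      ⟨(shiftFunctorAdd' C (k : ℤ) 1 ((k + 1 : ℕ) : ℤ) (by push_cast; ring)).app B⟩⟩

lemma wGE_subset_wGE {a b : ℤ} (hab : a ≤ b) : w.wGE b ⊆ w.wGE a := by
  rintro X ⟨B, hB, ⟨e⟩⟩
  obtain ⟨k, hk⟩ := Int.eq_ofNat_of_zero_le (sub_nonneg.mpr hab)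
  refine ⟨B⟦b - a⟧, hk ▸ w.shift_mem_ge_s16 hB k, ⟨e ≪≫ ?_⟩⟩
  exact (shiftFunctorAdd' C (b - a) a b (by ring)).app B

lemma hom_eq_zero_of_lt_s16 {a b : ℤ} (hab : a < b) {A B : C} (hA : A ∈ w.wLE a)
    (hB : B ∈ w.wGE b) (f : A ⟶ B) : f = 0 := by
  have hA₀ : A⟦-a⟧ ∈ w.le := w.mem_le_of_mem_wLE_zero (shiftedSet_shift (by ring) hA)
  have hB₁ : B⟦-a⟧ ∈ shiftedSet w.ge 1 :=
    shiftedSet_shift (by ring) (w.wGE_subset_wGE (show a + 1 ≤ b by omega) hB)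
  apply (shiftFunctor C (-a)).map_injective
  rw [w.orth _ _ hA₀ hB₁ ((shiftFunctor C (-a)).map f), Functor.map_zero]

end WeightStructure

/-- Given weight filtrations of `M` and `N` avoiding weights `m, …, n`, any morphism
`α : M ⟶ N` kills the outer composition, and the two evident compositions factor uniquely
through the respective filtrations. -/
theorem weightFiltration_factorisations
    {C : Type u} [Category.{v} C] [Preadditive C] [HasZeroObject C]
    [HasShift C ℤ] [∀ n : ℤ, (shiftFunctor C n).Additive] [Pretriangulated C]
    (w : WeightStructure C) (m n : ℤ) (hmn : m ≤ n)
    (M N MA MB NA NB : C)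
    (xm : MA ⟶ M) (xp : M ⟶ MB) (dM : MB ⟶ MA⟦(1:ℤ)⟧)
    (hM : Triangle.mk xm xp dM ∈ distTriang C)
    (hMA : MA ∈ w.wLE (m - 1)) (hMB : MB ∈ w.wGE (n + 1))
    (ym : NA ⟶ N) (yp : N ⟶ NB) (dN : NB ⟶ NA⟦(1:ℤ)⟧)
    (hN : Triangle.mk ym yp dN ∈ distTriang C)
    (hNA : NA ∈ w.wLE (m - 1)) (hNB : NB ∈ w.wGE (n + 1))
    (α : M ⟶ N) :
    (xm ≫ α ≫ yp = 0) ∧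
    (∃! β : MA ⟶ NA, β ≫ ym = xm ≫ α) ∧
    (∃! γ : MB ⟶ NB, xp ≫ γ = α ≫ yp) := by
  have hzero : xm ≫ α ≫ yp = 0 := w.hom_eq_zero_of_lt_s16 (by omega) hMA hNB _
  have hNB' : NB⟦(-1 : ℤ)⟧ ∈ w.wGE n := shiftedSet_shift (by ring) hNB
  have hMA' : MA⟦(1 : ℤ)⟧ ∈ w.wLE m := shiftedSet_shift (by ring) hMA
  refine ⟨hzero, ?_, ?_⟩
  · exact existsUnique_lift_of_distTriang _ hN (xm ≫ α)
      ((Category.assoc _ _ _).trans hzero)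
      (w.hom_eq_zero_of_lt_s16 (by omega) hMA hNB')
  · exact existsUnique_desc_of_distTriang _ hM (α ≫ yp) hzero
      (w.hom_eq_zero_of_lt_s16 (by omega) hMA' hNB)
end
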